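/- The q-Fibonacci polynomials satisfy the four-term recurrence F_n(x,s,q) = x·F_{n-1}(x,s,q) + q^{n-2}·s·x·F_{n-3}(x,s,q) + q^{n-2}·s^2·F_{n-4}(x,s,q) for all n ≥ 4. -/

import Mathlib

open Finset

noncomputable section

abbrev K : Type := RatFunc ℚ

def q : K := RatFunc.X

def qint (a : K) (m : ℕ) : K := ∑ i ∈ range m, a ^ i

def qfact (a : K) (m : ℕ) : K := ∏ i ∈ range m, qint a (i + 1)

def qbinom (a : K) (n k : ℕ) : K :=
  if k ≤ n then qfact a n / (qfact a k * qfact a (n - k)) else 0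

/-- q-Fibonacci polynomials F_n(x,s,q) with base `a`. -/
def qF (a x s : K) : ℕ → K
  | 0 => 0
  | n + 1 => ∑ k ∈ range (n / 2 + 1),
      a ^ (k * (k + 1) / 2) * qbinom a (n - k) k * s ^ k * x ^ (n - 2 * k)

/-- q-Lucas polynomials L_n(x,s,q) with base `a` (L_0 = 2). -/
def qL (a x s : K) (n : ℕ) : K :=
  if n = 0 then 2 else
  ∑ k ∈ range (n / 2 + 1),
    a ^ (k * (k - 1) / 2) * (qint a n / qint a (n - k)) * qbinom a (n - k) k
      * s ^ k * x ^ (n - 2 * k)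

/-- Starred variant: L*_0 = 1, L*_n = L_n for n > 0. -/
def qLs (a x s : K) (n : ℕ) : K := if n = 0 then 1 else qL a x s n

/-- Rogers-Szegő polynomial. -/
def rs (a x y : K) (m : ℕ) : K := ∑ j ∈ range (m + 1), qbinom a m j * x ^ j * y ^ (m - j)

/-- q-Pochhammer (q;q)_m. -/
def qpoch (a : K) (m : ℕ) : K := ∏ j ∈ range m, (1 - a ^ (j + 1))

/-! Writing `G_n(s)` for `F_n(x,s,q)`, the two q-Pascal rules for the Gaussian binomials give two
three-term recurrences in which the second variable is rescaled by `q`: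
`G_{n+2}(s) = x G_{n+1}(qs) + qs G_n(qs)` and `G_{n+2}(qs) = x G_{n+1}(qs) + q^{n+1} s G_n(s)`.
Applying the second at `s/q` and expanding its last term `G_{n+2}(s/q)` with the first eliminates
the rescaled values and leaves the four-term recurrence. -/

section QBinomial

variable {a : K}

lemma qint_add (i j : ℕ) : qint a (i + j) = qint a i + a ^ i * qint a j := by
  simp only [qint, sum_range_add, mul_sum, pow_add]

lemma qfact_zero : qfact a 0 = 1 := prod_range_zero _

lemma qfact_succ (m : ℕ) : qfact a (m + 1) = qfact a m * qint a (m + 1) := prod_range_succ _ _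

lemma qint_succ_ne_zero (ha : ∀ m, qfact a m ≠ 0) (m : ℕ) : qint a (m + 1) ≠ 0 :=
  right_ne_zero_of_mul (qfact_succ (a := a) m ▸ ha (m + 1))

lemma qbinom_of_lt {n k : ℕ} (h : n < k) : qbinom a n k = 0 := if_neg (by omega)

lemma qbinom_add_left (k d : ℕ) :
    qbinom a (k + d) k = qfact a (k + d) / (qfact a k * qfact a d) := by
  rw [qbinom, if_pos (by omega), Nat.add_sub_cancel_left]

lemma qbinom_zero_right (ha : ∀ m, qfact a m ≠ 0) (n : ℕ) : qbinom a n 0 = 1 := by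
  have h := qbinom_add_left (a := a) 0 n
  rw [zero_add] at h
  rw [h, qfact_zero, one_mul, div_self (ha n)]

lemma qbinom_self (ha : ∀ m, qfact a m ≠ 0) (n : ℕ) : qbinom a n n = 1 := by
  have h := qbinom_add_left (a := a) n 0
  rw [add_zero] at h
  rw [h, qfact_zero, mul_one, div_self (ha n)]

lemma qbinom_succ_add_succ (ha : ∀ m, qfact a m ≠ 0) (k d : ℕ) :
    qbinom a (k + 1 + (d + 1)) (k + 1)
      = qbinom a (k + 1 + d) (k + 1) + a ^ (d + 1) * qbinom a (k + (d + 1)) k := by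
  have hint : qint a (k + (d + 1) + 1) = qint a (d + 1) + a ^ (d + 1) * qint a (k + 1) := by
    rw [show k + (d + 1) + 1 = d + 1 + (k + 1) by ring, qint_add]
  simp only [qbinom_add_left]
  rw [show k + 1 + (d + 1) = k + (d + 1) + 1 by ring, show k + 1 + d = k + (d + 1) by ring,
    qfact_succ (k + (d + 1)), qfact_succ k, qfact_succ d, hint]
  have := ha k; have := ha d
  have := qint_succ_ne_zero ha k; have := qint_succ_ne_zero ha d
  field_simp

lemma qbinom_succ_add_succ' (ha : ∀ m, qfact a m ≠ 0) (k d : ℕ) :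
    qbinom a (k + 1 + (d + 1)) (k + 1)
      = a ^ (k + 1) * qbinom a (k + 1 + d) (k + 1) + qbinom a (k + (d + 1)) k := by
  have hint : qint a (k + (d + 1) + 1) = qint a (k + 1) + a ^ (k + 1) * qint a (d + 1) := by
    rw [show k + (d + 1) + 1 = k + 1 + (d + 1) by ring, qint_add]
  simp only [qbinom_add_left]
  rw [show k + 1 + (d + 1) = k + (d + 1) + 1 by ring, show k + 1 + d = k + (d + 1) by ring,
    qfact_succ (k + (d + 1)), qfact_succ k, qfact_succ d, hint]
  have := ha k; have := ha d
  have := qint_succ_ne_zero ha k; have := qint_succ_ne_zero ha d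
  field_simp
  ring

end QBinomial

lemma qint_q_ne_zero {m : ℕ} (hm : m ≠ 0) : qint q m ≠ 0 := by
  have h : qint q m = algebraMap (Polynomial ℚ) K (∑ i ∈ range m, Polynomial.X ^ i) := by
    simp [qint, q, RatFunc.algebraMap_X]
  rw [h, Ne, map_eq_zero_iff _ (RatFunc.algebraMap_injective ℚ)]
  intro h0
  simpa [hm] using congrArg (Polynomial.eval 1) h0

lemma qfact_q_ne_zero (m : ℕ) : qfact q m ≠ 0 :=
  prod_ne_zero_iff.2 fun i _ => qint_q_ne_zero (Nat.succ_ne_zero i)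

section QFibonacci

variable {a x : K}

def qFTerm (a x s : K) (n k : ℕ) : K :=
  a ^ (k * (k + 1) / 2) * qbinom a (n - k) k * s ^ k * x ^ (n - 2 * k)

lemma triangle_succ (k : ℕ) : (k + 1) * (k + 1 + 1) / 2 = k * (k + 1) / 2 + (k + 1) := by
  rw [show (k + 1) * (k + 1 + 1) = k * (k + 1) + (k + 1) * 2 by ring,
    Nat.add_mul_div_right _ _ two_pos]

lemma qFTerm_eq_zero {s : K} {n k : ℕ} (h : n < 2 * k) : qFTerm a x s n k = 0 := by
  rw [qFTerm, qbinom_of_lt (by omega), mul_zero, zero_mul, zero_mul]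

lemma qFTerm_two_mul_add (s : K) (k i : ℕ) :
    qFTerm a x s (2 * k + i) k = a ^ (k * (k + 1) / 2) * qbinom a (k + i) k * s ^ k * x ^ i := by
  rw [qFTerm, show 2 * k + i - k = k + i by omega, Nat.add_sub_cancel_left]

lemma qFTerm_succ_zero (ha : ∀ m, qfact a m ≠ 0) (s t : K) (n : ℕ) :
    qFTerm a x s (n + 1) 0 = x * qFTerm a x t n 0 := by
  simp only [qFTerm, qbinom_zero_right ha, Nat.sub_zero, Nat.mul_zero, pow_zero, pow_succ]
  ring

lemma qF_succ_eq_sum_range (s : K) {n R : ℕ} (hR : n < 2 * R) :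
    qF a x s (n + 1) = ∑ k ∈ range R, qFTerm a x s n k :=
  sum_subset (range_subset_range.2 (by omega)) fun k _ hk =>
    qFTerm_eq_zero (by simp only [mem_range] at hk; omega)

lemma qF_add_three_of_qFTerm (ha : ∀ m, qfact a m ≠ 0) {s s' t c : K} (m : ℕ)
    (h : ∀ k, qFTerm a x s (m + 2) (k + 1)
      = x * qFTerm a x s' (m + 1) (k + 1) + c * qFTerm a x t m k) :
    qF a x s (m + 3) = x * qF a x s' (m + 2) + c * qF a x t (m + 1) := by
  rw [show m + 3 = m + 2 + 1 from rfl, qF_succ_eq_sum_range s (R := m + 2) (by omega),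
    qF_succ_eq_sum_range s' (n := m + 1) (R := m + 2) (by omega),
    qF_succ_eq_sum_range t (n := m) (R := m + 1) (by omega),
    sum_range_succ', sum_range_succ' _ (m + 1), mul_add, mul_sum, mul_sum,
    qFTerm_succ_zero ha s s' (m + 1), add_right_comm, ← sum_add_distrib]
  exact congrArg (· + _) (sum_congr rfl fun k _ => h k)

lemma qFTerm_succ_succ_eq_scaled (ha : ∀ m, qfact a m ≠ 0) (s : K) (m k : ℕ) :
    qFTerm a x s (m + 2) (k + 1)
      = x * qFTerm a x (a * s) (m + 1) (k + 1) + a * s * qFTerm a x (a * s) m k := by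
  rcases lt_trichotomy m (2 * k) with h | rfl | h
  · rw [qFTerm_eq_zero (by omega), qFTerm_eq_zero (by omega), qFTerm_eq_zero h]
    ring
  · have e1 := qFTerm_two_mul_add (a := a) (x := x) s (k + 1) 0
    have e2 := qFTerm_two_mul_add (a := a) (x := x) (a * s) k 0
    simp only [add_zero] at e1 e2
    rw [qFTerm_eq_zero (n := 2 * k + 1) (by omega), show 2 * k + 2 = 2 * (k + 1) by ring, e1, e2,
      qbinom_self ha, qbinom_self ha, triangle_succ]
    ring
  · obtain ⟨i, rfl⟩ : ∃ i, m = 2 * k + 1 + i := ⟨m - 2 * k - 1, by omega⟩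
    rw [show 2 * k + 1 + i + 2 = 2 * (k + 1) + (i + 1) by ring,
      show 2 * k + 1 + i + 1 = 2 * (k + 1) + i by ring, show 2 * k + 1 + i = 2 * k + (i + 1) by ring,
      qFTerm_two_mul_add, qFTerm_two_mul_add, qFTerm_two_mul_add, qbinom_succ_add_succ' ha,
      triangle_succ]
    ring

lemma qFTerm_scaled_succ_succ (ha : ∀ m, qfact a m ≠ 0) (s : K) (m k : ℕ) :
    qFTerm a x (a * s) (m + 2) (k + 1)
      = x * qFTerm a x (a * s) (m + 1) (k + 1) + a ^ (m + 2) * s * qFTerm a x s m k := by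
  rcases lt_trichotomy m (2 * k) with h | rfl | h
  · rw [qFTerm_eq_zero (by omega), qFTerm_eq_zero (by omega), qFTerm_eq_zero h]
    ring
  · have e1 := qFTerm_two_mul_add (a := a) (x := x) (a * s) (k + 1) 0
    have e2 := qFTerm_two_mul_add (a := a) (x := x) s k 0
    simp only [add_zero] at e1 e2
    rw [qFTerm_eq_zero (n := 2 * k + 1) (by omega), show 2 * k + 2 = 2 * (k + 1) by ring, e1, e2,
      qbinom_self ha, qbinom_self ha, triangle_succ]
    ring
  · obtain ⟨i, rfl⟩ : ∃ i, m = 2 * k + 1 + i := ⟨m - 2 * k - 1, by omega⟩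
    rw [show 2 * k + 1 + i + 2 = 2 * (k + 1) + (i + 1) by ring,
      show 2 * k + 1 + i + 1 = 2 * (k + 1) + i by ring, show 2 * k + 1 + i = 2 * k + (i + 1) by ring,
      qFTerm_two_mul_add, qFTerm_two_mul_add, qFTerm_two_mul_add, qbinom_succ_add_succ ha,
      triangle_succ]
    ring

lemma qF_add_two_eq_scaled (ha : ∀ m, qfact a m ≠ 0) (s : K) (n : ℕ) :
    qF a x s (n + 2) = x * qF a x (a * s) (n + 1) + a * s * qF a x (a * s) n := by
  cases n with
  | zero =>
    rw [qF_succ_eq_sum_range s (n := 1) (R := 1) (by omega),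
      qF_succ_eq_sum_range (a * s) (n := 0) (R := 1) (by omega), sum_range_one, sum_range_one,
      qFTerm_succ_zero ha s (a * s), qF, mul_zero, add_zero]
  | succ m => exact qF_add_three_of_qFTerm ha m (qFTerm_succ_succ_eq_scaled ha s m)

lemma qF_scaled_add_three (ha : ∀ m, qfact a m ≠ 0) (s : K) (m : ℕ) :
    qF a x (a * s) (m + 3) = x * qF a x (a * s) (m + 2) + a ^ (m + 2) * s * qF a x s (m + 1) :=
  qF_add_three_of_qFTerm ha m (qFTerm_scaled_succ_succ ha s m)

end QFibonacci

theorem stmt2 (x s : K) (n : ℕ) (hn : 4 ≤ n) :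
    qF q x s n = x * qF q x s (n - 1) + q ^ (n - 2) * s * x * qF q x s (n - 3)
      + q ^ (n - 2) * s ^ 2 * qF q x s (n - 4) := by
  obtain ⟨m, rfl⟩ : ∃ m, n = m + 4 := ⟨n - 4, by omega⟩
  have hq : q ≠ 0 := RatFunc.X_ne_zero
  have hA := qF_scaled_add_three qfact_q_ne_zero (x := x) (s / q) (m + 1)
  have hB := qF_add_two_eq_scaled qfact_q_ne_zero (x := x) (s / q) m
  rw [mul_div_cancel₀ s hq] at hA hB
  rw [show m + 4 - 1 = m + 3 by omega, show m + 4 - 2 = m + 2 by omega,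
    show m + 4 - 3 = m + 1 by omega, Nat.add_sub_cancel, show m + 4 = m + 1 + 3 from rfl, hA, hB]
  field_simp
  ring
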